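/- Let G = (V,E;w) be a finite simple undirected graph with positive vertex weights and no isolated vertices, let α* be its minimal α-ratio, let B* be its maximal bottleneck, and let ε > 0. Then cap(B*,ε) = min over all bottlenecks B of G of cap(B,ε); that is, B* minimizes cap(B,ε) among all nonempty B ⊆ V with α(B) = α*. -/
import Mathlib


open Finset

/-- The total weight of a finite set of vertices. -/
def wsum {V : Type*} (w : V → ℝ) (S : Finset V) : ℝ := ∑ v ∈ S, w v

/-- The neighborhood `Γ(S)` of a set `S` of vertices: all vertices adjacent to at least one
vertex of `S`. -/
def nbhd {V : Type*} [Fintype V] [DecidableEq V] (G : SimpleGraph V) [DecidableRel G.Adj]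
    (S : Finset V) : Finset V :=
  univ.filter fun v => ∃ u ∈ S, G.Adj u v

/-- The α-ratio `α(S) = w(Γ(S)) / w(S)` of a set `S`. -/
noncomputable def alphaR {V : Type*} [Fintype V] [DecidableEq V] (G : SimpleGraph V)
    [DecidableRel G.Adj] (w : V → ℝ) (S : Finset V) : ℝ :=
  wsum w (nbhd G S) / wsum w S

section Aux
variable {V : Type*} [Fintype V] [DecidableEq V] (G : SimpleGraph V) [DecidableRel G.Adj]
  (w : V → ℝ)

lemma wsum_pos (hw : ∀ v, 0 < w v) {S : Finset V} (hS : S.Nonempty) : 0 < wsum w S :=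
  Finset.sum_pos (fun v _ => hw v) hS

lemma wsum_mono (hw : ∀ v, 0 < w v) {S T : Finset V} (h : S ⊆ T) : wsum w S ≤ wsum w T :=
  Finset.sum_le_sum_of_subset_of_nonneg h (fun v _ _ => (hw v).le)

lemma nbhd_union (S T : Finset V) : nbhd G (S ∪ T) = nbhd G S ∪ nbhd G T := by
  ext v; simp [nbhd]; aesop

lemma nbhd_inter_subset (S T : Finset V) : nbhd G (S ∩ T) ⊆ nbhd G S ∩ nbhd G T := by
  intro v hv; simp [nbhd] at *; aesop

lemma wsum_union_inter (S T : Finset V) :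
    wsum w (S ∪ T) + wsum w (S ∩ T) = wsum w S + wsum w T :=
  Finset.sum_union_inter

end Aux

/-- `B` is a maximal bottleneck: it is nonempty, its α-ratio is minimal among all nonempty
subsets (i.e. `α(B) = α*`), and every strictly larger subset has strictly larger α-ratio. -/
def IsMaxBottleneck {V : Type*} [Fintype V] [DecidableEq V] (G : SimpleGraph V)
    [DecidableRel G.Adj] (w : V → ℝ) (B : Finset V) : Prop :=
  B.Nonempty ∧ (∀ S : Finset V, S.Nonempty → alphaR G w B ≤ alphaR G w S) ∧
    ∀ B' : Finset V, B ⊂ B' → alphaR G w B < alphaR G w B'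

/-- The capacity `cap(B,ε) = α*·(w(V) − w(B)) + w(Γ(B)) + (n − |B|)·ε` of the cut with
source side `{s} ∪ B ∪ {ũ : u ∈ Γ(B)}` in the network `N(G,α*,ε)`, where `n = |V|`. -/
noncomputable def capEps {V : Type*} [Fintype V] [DecidableEq V] (G : SimpleGraph V)
    [DecidableRel G.Adj] (w : V → ℝ) (astar eps : ℝ) (B : Finset V) : ℝ :=
  astar * (wsum w univ - wsum w B) + wsum w (nbhd G B) +
    ((Fintype.card V : ℝ) - B.card) * eps

/-- for any `ε > 0`, the maximal bottleneck `B*` minimizes `cap(B,ε)` among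
all bottlenecks `B` (nonempty sets with `α(B) = α*`); in particular `α(B*) = α*`, so
`cap(B*,ε) = min over all bottlenecks B of cap(B,ε)`. -/
theorem maximal_bottleneck_minimizes_capEps {V : Type*} [Fintype V] [DecidableEq V]
    (G : SimpleGraph V) [DecidableRel G.Adj] (w : V → ℝ)
    (hw : ∀ v, 0 < w v) (hiso : ∀ v : V, ∃ u, G.Adj v u)
    (astar : ℝ)
    (hstar : IsLeast {r : ℝ | ∃ S : Finset V, S.Nonempty ∧ r = alphaR G w S} astar)
    (Bstar : Finset V) (hBstar : IsMaxBottleneck G w Bstar)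
    (eps : ℝ) (heps : 0 < eps) :
    alphaR G w Bstar = astar ∧
      ∀ B : Finset V, B.Nonempty → alphaR G w B = astar →
        capEps G w astar eps Bstar ≤ capEps G w astar eps B := by
  obtain ⟨hBne, hmin, hmax⟩ := hBstar
  have hlb : ∀ S : Finset V, S.Nonempty → astar ≤ alphaR G w S := by
    intro S hS; exact hstar.2 ⟨S, hS, rfl⟩
  have h1 : alphaR G w Bstar = astar := by
    obtain ⟨S0, hS0, hr⟩ := hstar.1
    exact le_antisymm (hr ▸ hmin S0 hS0) (hlb Bstar hBne)
  have key : ∀ S : Finset V, astar * wsum w S ≤ wsum w (nbhd G S) := by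
    intro S
    rcases S.eq_empty_or_nonempty with rfl | hS
    · simp [wsum, nbhd]
    · have hpos := wsum_pos w hw hS
      have h := hlb S hS
      rw [alphaR, le_div_iff₀ hpos] at h
      exact h
  have heq : ∀ S : Finset V, S.Nonempty → alphaR G w S = astar →
      wsum w (nbhd G S) = astar * wsum w S := by
    intro S hS hα
    have hpos := wsum_pos w hw hS
    rw [alphaR, div_eq_iff hpos.ne'] at hα
    linarith [hα]
  refine ⟨h1, fun B hBne' hBα => ?_⟩
  -- show B ⊆ Bstar
  have hsub : B ⊆ Bstar := by
    set U := B ∪ Bstar with hU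
    have hUne : U.Nonempty := hBne'.mono Finset.subset_union_left
    have hUpos := wsum_pos w hw hUne
    have hΓU : wsum w (nbhd G U) ≤ astar * wsum w U := by
      have e1 : wsum w (nbhd G U) + wsum w (nbhd G B ∩ nbhd G Bstar)
          = wsum w (nbhd G B) + wsum w (nbhd G Bstar) := by
        rw [hU, nbhd_union]; exact wsum_union_inter w _ _
      have e2 : wsum w (nbhd G (B ∩ Bstar)) ≤ wsum w (nbhd G B ∩ nbhd G Bstar) :=
        wsum_mono w hw (nbhd_inter_subset G B Bstar)
      have e3 := key (B ∩ Bstar)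
      have e4 : wsum w U + wsum w (B ∩ Bstar) = wsum w B + wsum w Bstar :=
        wsum_union_inter w B Bstar
      have e5 := heq B hBne' hBα
      have e6 := heq Bstar hBne h1
      have e4' : astar * wsum w U =
          astar * wsum w B + astar * wsum w Bstar - astar * wsum w (B ∩ Bstar) := by
        linear_combination astar * e4
      linarith
    have hαU : alphaR G w U ≤ astar := by
      rw [alphaR, div_le_iff₀ hUpos]; linarith
    have hαU' : astar ≤ alphaR G w U := hlb U hUne
    rcases (Finset.subset_union_right : Bstar ⊆ U).ssubset_or_eq with hss | heqU
    · exact absurd (hmax U hss) (by rw [h1]; linarith)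
    · intro x hx
      have hx' : x ∈ B ∪ Bstar := Finset.mem_union_left _ hx
      rwa [← heqU] at hx'
  have hcard : (B.card : ℝ) ≤ Bstar.card := by
    exact_mod_cast Finset.card_le_card hsub
  have e5 := heq B hBne' hBα
  have e6 := heq Bstar hBne h1
  unfold capEps
  rw [e5, e6]
  nlinarith [heps]
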